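/- arXiv:2212.12241 — 2 statements merged into one kernel-verified Lean document; each statement's English description precedes it below -/
import Mathlib

section
/- Let X, Y be real random variables that are positively quadrant dependent, i.e. P{X ≤ u, Y ≤ v} − P{X ≤ u}P{Y ≤ v} ≥ 0 for all reals u, v, and let 0 < L ≤ K with E X² < ∞ and E Y² < ∞. Then G_{X,Y}(L) ≥ 0, G_{X,Y}(L) ≤ G_{X,Y}(K), and (G_{X,Y}(L))⁺ + (H_{X,Y}(L,K))⁺ ≤ G_{X,Y}(K). -/
open MeasureTheory Finset Filter

noncomputable section

variable {Ω : Type*} [MeasurableSpace Ω]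

/-- Truncation at level `L`: `g_L(t) = max (-L) (min t L)`. -/
def gtr (L t : ℝ) : ℝ := max (-L) (min t L)

/-- `h_{L,K}(t) = |g_K(t) - g_L(t)|`. -/
def htr (L K t : ℝ) : ℝ := |gtr K t - gtr L t|

/-- Covariance `Cov(U,V) = E[UV] - E[U] E[V]`. -/
def cov (μ : Measure Ω) (U V : Ω → ℝ) : ℝ :=
  (∫ ω, U ω * V ω ∂μ) - (∫ ω, U ω ∂μ) * (∫ ω, V ω ∂μ)

/-- `G_{X,Y}(L) = Cov(g_L(X), g_L(Y))`. -/
def Gcov (μ : Measure Ω) (X Y : Ω → ℝ) (L : ℝ) : ℝ :=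
  cov μ (fun ω => gtr L (X ω)) (fun ω => gtr L (Y ω))

/-- `H_{X,Y}(L,K) = Cov(h_{L,K}(X), h_{L,K}(Y))`. -/
def Hcov (μ : Measure Ω) (X Y : Ω → ℝ) (L K : ℝ) : ℝ :=
  cov μ (fun ω => htr L K (X ω)) (fun ω => htr L K (Y ω))

/-- Maximum of `f 0, f 1, ..., f N`. -/
def fmax (N : ℕ) (f : ℕ → ℝ) : ℝ :=
  (Finset.range (N + 1)).sup' Finset.nonempty_range_add_one f

/-- Sum over pairs `a ≤ i < j ≤ b` of `f i j`. -/
def pairSum (a b : ℕ) (f : ℕ → ℕ → ℝ) : ℝ :=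
  ∑ i ∈ Finset.Icc a b, ∑ j ∈ Finset.Icc (i + 1) b, f i j

/-- `{X_n}` is stochastically dominated by `Y`. -/
def StochDom (μ : Measure Ω) (X : ℕ → Ω → ℝ) (Y : Ω → ℝ) : Prop :=
  ∃ C : ℝ, 0 < C ∧ ∀ n : ℕ, 1 ≤ n → ∀ t : ℝ, 0 < t →
    μ {ω | t < |X n ω|} ≤ ENNReal.ofReal C * μ {ω | t < |Y ω|}

/-!
Write `g_K = g_L + p + n`, where `p` clamps to `[L, K]` and `n` clamps to `[-K, -L]`; then
`h_{L,K} = p - n - 2L`. All three pieces are nondecreasing, continuous and bounded, and positive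
quadrant dependence survives nondecreasing continuous maps, so Lehmann's inequality
`E[UV] ≥ E[U] E[V]` (from the layer-cake formula `E[UV] = ∫∫ P{U > u, V > v} du dv` for
nonnegative `U, V`) makes all nine covariances between pieces of `X` and pieces of `Y`
nonnegative. `G_K` is the sum of these nine, `G_L` is one of them, and `H_{L,K}` differs from
the `p, n` block of `G_K` only in the sign of its two mixed terms.
-/

open Set ProbabilityTheory

def clamp (a b t : ℝ) : ℝ := max a (min t b)

lemma monotone_clamp (a b : ℝ) : Monotone (clamp a b) :=
  monotone_const.max (monotone_id.min monotone_const)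

lemma continuous_clamp (a b : ℝ) : Continuous (clamp a b) := by
  unfold clamp; fun_prop

lemma le_clamp (a b t : ℝ) : a ≤ clamp a b t := le_max_left _ _

lemma abs_clamp_le (a b t : ℝ) : |clamp a b t| ≤ |a| + |b| := by
  simp only [clamp, max_def, min_def]
  split_ifs <;> simp only [abs_le] <;> constructor <;>
    linarith [le_abs_self a, neg_abs_le a, le_abs_self b, neg_abs_le b]

lemma htr_eq_clamp_sub {L K : ℝ} (hL : 0 ≤ L) (hLK : L ≤ K) (t : ℝ) :
    htr L K t = clamp L K t - clamp (-K) (-L) t - 2 * L := by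
  simp only [htr, gtr, clamp, max_def, min_def]
  split_ifs <;> rw [abs_eq_max_neg, max_def] <;> split_ifs <;> linarith

lemma Monotone.setOf_le_trichotomy {f : ℝ → ℝ} (hf : Monotone f) (hfc : Continuous f)
    (u : ℝ) :
    {x | f x ≤ u} = ∅ ∨ {x | f x ≤ u} = univ ∨ ∃ c, {x | f x ≤ u} = Set.Iic c := by
  set S := {x | f x ≤ u}
  have hlower : IsLowerSet S := fun x y hyx hx => (hf hyx).trans hx
  rcases S.eq_empty_or_nonempty with hS | hS
  · exact Or.inl hS
  by_cases hbdd : BddAbove S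
  · refine Or.inr (Or.inr ⟨sSup S, Subset.antisymm (fun x hx => le_csSup hbdd hx) ?_⟩)
    exact fun x hx => hlower hx ((isClosed_le hfc continuous_const).csSup_mem hS hbdd)
  · refine Or.inr (Or.inl (eq_univ_of_forall fun x => ?_))
    obtain ⟨y, hy, hxy⟩ := not_bddAbove_iff.1 hbdd x
    exact hlower hxy.le hy

def PQD (μ : Measure Ω) (X Y : Ω → ℝ) : Prop :=
  ∀ u v : ℝ, (μ {ω | X ω ≤ u}).toReal * (μ {ω | Y ω ≤ v}).toReal ≤
    (μ {ω | X ω ≤ u ∧ Y ω ≤ v}).toReal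

namespace PQD

variable {μ : Measure Ω} [IsProbabilityMeasure μ] {X Y : Ω → ℝ}

lemma preimage_mul_le (h : PQD μ X Y) {s t : Set ℝ}
    (hs : s = ∅ ∨ s = Set.univ ∨ ∃ c, s = Set.Iic c)
    (ht : t = ∅ ∨ t = Set.univ ∨ ∃ d, t = Set.Iic d) :
    (μ (X ⁻¹' s)).toReal * (μ (Y ⁻¹' t)).toReal ≤
      (μ (X ⁻¹' s ∩ Y ⁻¹' t)).toReal := by
  rcases hs with rfl | rfl | ⟨c, rfl⟩ <;> rcases ht with rfl | rfl | ⟨d, rfl⟩ <;>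
    first | exact h _ _ | simp

lemma comp (h : PQD μ X Y) {f g : ℝ → ℝ} (hf : Monotone f) (hfc : Continuous f)
    (hg : Monotone g) (hgc : Continuous g) : PQD μ (fun ω => f (X ω)) (fun ω => g (Y ω)) :=
  fun u v => h.preimage_mul_le (s := {x | f x ≤ u}) (t := {y | g y ≤ v})
    (hf.setOf_le_trichotomy hfc u) (hg.setOf_le_trichotomy hgc v)

lemma measure_gt_mul_le (h : PQD μ X Y) (hX : Measurable X) (hY : Measurable Y) (u v : ℝ) :
    μ {ω | u < X ω} * μ {ω | v < Y ω} ≤ μ {ω | u < X ω ∧ v < Y ω} := by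
  set A := {ω | X ω ≤ u}
  set B := {ω | Y ω ≤ v}
  have hA : MeasurableSet A := hX measurableSet_Iic
  have hB : MeasurableSet B := hY measurableSet_Iic
  have hAc : {ω | u < X ω} = Aᶜ := by ext; simp [A]
  have hBc : {ω | v < Y ω} = Bᶜ := by ext; simp [B]
  have hABc : {ω | u < X ω ∧ v < Y ω} = (A ∪ B)ᶜ := by ext; simp [A, B]
  rw [hAc, hBc, hABc, ← ENNReal.toReal_le_toReal (by finiteness) (by finiteness),
    ENNReal.toReal_mul]
  change μ.real Aᶜ * μ.real Bᶜ ≤ μ.real (A ∪ B)ᶜ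
  rw [probReal_compl_eq_one_sub hA, probReal_compl_eq_one_sub hB,
    probReal_compl_eq_one_sub (hA.union hB)]
  have hunion := measureReal_union_add_inter (μ := μ) (s := A) hB
  have hpqd : μ.real A * μ.real B ≤ μ.real (A ∩ B) := h u v
  nlinarith

end PQD

lemma setLIntegral_Ioi_zero_indicator_Iio (c : ℝ) :
    ∫⁻ u in Ioi (0 : ℝ), (Iio c).indicator 1 u = ENNReal.ofReal c := by
  rw [lintegral_indicator measurableSet_Iio, Measure.restrict_restrict measurableSet_Iio,
    Pi.one_def, setLIntegral_one, Iio_inter_Ioi, Real.volume_Ioo, sub_zero]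

lemma lintegral_ofReal_mul_eq_lintegral_measure_gt (μ : Measure Ω) [SFinite μ]
    {U V : Ω → ℝ} (hU : Measurable U) (hV : Measurable V) (hU0 : 0 ≤ U) (hV0 : 0 ≤ V) :
    ∫⁻ ω, ENNReal.ofReal (U ω * V ω) ∂μ
      = ∫⁻ u in Ioi 0, ∫⁻ v in Ioi 0, μ {ω | u < U ω ∧ v < V ω} := by
  -- Slice `U ω` by the layer-cake formula, swap the integrals, then apply the layer-cake
  -- formula to `V` under `μ` restricted to `{u < U}`.
  have hslice : ∀ ω, ENNReal.ofReal (U ω * V ω)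
      = ∫⁻ u in Ioi 0, (Iio (U ω)).indicator 1 u * ENNReal.ofReal (V ω) := by
    intro ω
    rw [lintegral_mul_const _ (measurable_one.indicator measurableSet_Iio),
      setLIntegral_Ioi_zero_indicator_Iio, ENNReal.ofReal_mul (hU0 ω)]
  have hmeas : Measurable fun p : Ω × ℝ =>
      (Iio (U p.1)).indicator 1 p.2 * ENNReal.ofReal (V p.1) := by
    refine Measurable.mul ?_ (by fun_prop)
    exact ((measurable_one (α := ENNReal)).indicator
      (measurableSet_lt measurable_snd (hU.comp measurable_fst)) :)
  calc ∫⁻ ω, ENNReal.ofReal (U ω * V ω) ∂μ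
      = ∫⁻ u in Ioi 0, ∫⁻ ω, (Iio (U ω)).indicator 1 u * ENNReal.ofReal (V ω) ∂μ := by
        simp_rw [hslice]
        exact lintegral_lintegral_swap hmeas.aemeasurable
    _ = ∫⁻ u in Ioi 0, ∫⁻ v in Ioi 0, μ {ω | u < U ω ∧ v < V ω} := by
        refine lintegral_congr fun u => ?_
        have hind : ∀ ω, (Iio (U ω)).indicator 1 u * ENNReal.ofReal (V ω)
            = {ω | u < U ω}.indicator (fun ω => ENNReal.ofReal (V ω)) ω := by
          intro ω; by_cases h : u < U ω <;> simp [h]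
        simp_rw [hind]
        rw [lintegral_indicator (measurableSet_lt measurable_const hU),
          lintegral_eq_lintegral_meas_lt _ (ae_of_all _ hV0) hV.aemeasurable.restrict]
        refine lintegral_congr fun v => ?_
        rw [Measure.restrict_apply (measurableSet_lt measurable_const hV), Set.inter_comm]
        rfl

lemma lintegral_mul_lintegral_le_of_measure_gt (μ : Measure Ω) [SFinite μ]
    {U V : Ω → ℝ} (hU : Measurable U) (hV : Measurable V) (hU0 : 0 ≤ U) (hV0 : 0 ≤ V)
    (h : ∀ u v : ℝ,
      μ {ω | u < U ω} * μ {ω | v < V ω} ≤ μ {ω | u < U ω ∧ v < V ω}) :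
    (∫⁻ ω, ENNReal.ofReal (U ω) ∂μ) * ∫⁻ ω, ENNReal.ofReal (V ω) ∂μ
      ≤ ∫⁻ ω, ENNReal.ofReal (U ω * V ω) ∂μ := by
  have hUtail : Measurable fun u : ℝ => μ {ω | u < U ω} :=
    Antitone.measurable fun _ _ huu' => measure_mono fun _ hω => huu'.trans_lt hω
  have hVtail : Measurable fun v : ℝ => μ {ω | v < V ω} :=
    Antitone.measurable fun _ _ hvv' => measure_mono fun _ hω => hvv'.trans_lt hω
  rw [lintegral_ofReal_mul_eq_lintegral_measure_gt μ hU hV hU0 hV0,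
    lintegral_eq_lintegral_meas_lt μ (ae_of_all _ hU0) hU.aemeasurable,
    lintegral_eq_lintegral_meas_lt μ (ae_of_all _ hV0) hV.aemeasurable,
    ← lintegral_mul_const _ hUtail]
  refine lintegral_mono fun u => ?_
  rw [← lintegral_const_mul _ hVtail]
  exact lintegral_mono fun v => h u v

lemma memLp_clamp_comp {μ : Measure Ω} [IsFiniteMeasure μ] {X : Ω → ℝ}
    (hX : AEMeasurable X μ) (a b : ℝ) : MemLp (fun ω => clamp a b (X ω)) 2 μ :=
  MemLp.of_bound ((continuous_clamp a b).comp_aestronglyMeasurable hX.aestronglyMeasurable)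
    (|a| + |b|) (ae_of_all _ fun _ => abs_clamp_le a b _)

namespace PQD

variable {μ : Measure Ω} [IsProbabilityMeasure μ] {X Y : Ω → ℝ}

lemma covariance_nonneg (h : PQD μ X Y) (hXm : Measurable X) (hYm : Measurable Y)
    (hX : MemLp X 2 μ) (hY : MemLp Y 2 μ) {a b : ℝ} (ha : ∀ ω, a ≤ X ω)
    (hb : ∀ ω, b ≤ Y ω) :
    0 ≤ cov[X, Y; μ] := by
  -- The shift makes both variables nonnegative without changing the covariance.
  set X' := fun ω => X ω - a
  set Y' := fun ω => Y ω - b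
  have hX' : MemLp X' 2 μ := hX.sub (memLp_const a)
  have hY' : MemLp Y' 2 μ := hY.sub (memLp_const b)
  have hX'0 : 0 ≤ X' := fun ω => sub_nonneg.2 (ha ω)
  have hY'0 : 0 ≤ Y' := fun ω => sub_nonneg.2 (hb ω)
  have hpqd' : PQD μ X' Y' :=
    h.comp (fun _ _ hxy => sub_le_sub_right hxy a) (continuous_sub_right a)
      (fun _ _ hxy => sub_le_sub_right hxy b) (continuous_sub_right b)
  have key := lintegral_mul_lintegral_le_of_measure_gt μ (hXm.sub_const a) (hYm.sub_const b)
    hX'0 hY'0 (hpqd'.measure_gt_mul_le (hXm.sub_const a) (hYm.sub_const b))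
  rw [← ofReal_integral_eq_lintegral_ofReal (hX'.integrable one_le_two) (ae_of_all _ hX'0),
    ← ofReal_integral_eq_lintegral_ofReal (hY'.integrable one_le_two) (ae_of_all _ hY'0),
    ← ofReal_integral_eq_lintegral_ofReal (f := fun ω => X' ω * Y' ω) (hX'.integrable_mul hY')
      (ae_of_all _ fun ω => mul_nonneg (hX'0 ω) (hY'0 ω)),
    ← ENNReal.ofReal_mul (integral_nonneg hX'0),
    ENNReal.ofReal_le_ofReal_iff (integral_nonneg fun ω => mul_nonneg (hX'0 ω) (hY'0 ω))] at key
  have hshift : cov[X, Y; μ] = cov[X', Y'; μ] := by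
    simp only [X', Y', covariance_sub_const_left (hX.integrable one_le_two),
      covariance_sub_const_right (hY.integrable one_le_two)]
  rw [hshift, covariance_eq_sub hX' hY']
  exact sub_nonneg.2 key

lemma covariance_clamp_nonneg (h : PQD μ X Y) (hX : Measurable X) (hY : Measurable Y)
    (a b c d : ℝ) : 0 ≤ cov[fun ω => clamp a b (X ω), fun ω => clamp c d (Y ω); μ] :=
  (h.comp (monotone_clamp a b) (continuous_clamp a b) (monotone_clamp c d)
      (continuous_clamp c d)).covariance_nonneg
    ((continuous_clamp a b).measurable.comp hX) ((continuous_clamp c d).measurable.comp hY)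
    (memLp_clamp_comp hX.aemeasurable a b) (memLp_clamp_comp hY.aemeasurable c d)
    (fun _ => le_clamp a b _) (fun _ => le_clamp c d _)

end PQD

/-- `g_L`, the clamp to `[L, K]` and the clamp to `[-K, -L]`. -/
def truncPiece (L K : ℝ) (i : Fin 3) : ℝ → ℝ := clamp (![-L, L, -K] i) (![L, K, -L] i)

lemma gtr_eq_sum_truncPiece {L K : ℝ} (hL : 0 ≤ L) (hLK : L ≤ K) (t : ℝ) :
    gtr K t = ∑ i, truncPiece L K i t := by
  simp only [Fin.sum_univ_three, truncPiece, Matrix.cons_val_zero, Matrix.cons_val_one,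
    Matrix.cons_val_two, Matrix.head_cons, Matrix.tail_cons]
  simp only [gtr, clamp, max_def, min_def]
  split_ifs <;> linarith

section Truncation

variable {μ : Measure Ω} [IsProbabilityMeasure μ] {X Y : Ω → ℝ}

lemma cov_eq_covariance {U V : Ω → ℝ} (hU : MemLp U 2 μ) (hV : MemLp V 2 μ) :
    cov μ U V = cov[U, V; μ] :=
  (covariance_eq_sub hU hV).symm

lemma Gcov_eq_covariance (hX : AEMeasurable X μ) (hY : AEMeasurable Y μ) (M : ℝ) :
    Gcov μ X Y M = cov[fun ω => gtr M (X ω), fun ω => gtr M (Y ω); μ] :=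
  cov_eq_covariance (memLp_clamp_comp hX (-M) M) (memLp_clamp_comp hY (-M) M)

lemma Gcov_eq_sum_covariance_truncPiece {L K : ℝ} (hL : 0 ≤ L) (hLK : L ≤ K)
    (hX : AEMeasurable X μ) (hY : AEMeasurable Y μ) :
    Gcov μ X Y K = ∑ i, ∑ j,
      cov[fun ω => truncPiece L K i (X ω), fun ω => truncPiece L K j (Y ω); μ] := by
  simp_rw [Gcov_eq_covariance hX hY, gtr_eq_sum_truncPiece hL hLK]
  exact covariance_fun_sum_fun_sum (fun i => memLp_clamp_comp hX _ _)
    (fun j => memLp_clamp_comp hY _ _)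

lemma Hcov_eq_covariance_clamp {L K : ℝ} (hL : 0 ≤ L) (hLK : L ≤ K)
    (hX : AEMeasurable X μ) (hY : AEMeasurable Y μ) :
    Hcov μ X Y L K = cov[fun ω => clamp L K (X ω), fun ω => clamp L K (Y ω); μ]
      - cov[fun ω => clamp L K (X ω), fun ω => clamp (-K) (-L) (Y ω); μ]
      - cov[fun ω => clamp (-K) (-L) (X ω), fun ω => clamp L K (Y ω); μ]
      + cov[fun ω => clamp (-K) (-L) (X ω), fun ω => clamp (-K) (-L) (Y ω); μ] := by
  have hXp := memLp_clamp_comp hX L K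
  have hXn := memLp_clamp_comp hX (-K) (-L)
  have hYp := memLp_clamp_comp hY L K
  have hYn := memLp_clamp_comp hY (-K) (-L)
  have hXh : MemLp (fun ω => clamp L K (X ω) - clamp (-K) (-L) (X ω)) 2 μ := hXp.sub hXn
  have hYh : MemLp (fun ω => clamp L K (Y ω) - clamp (-K) (-L) (Y ω)) 2 μ := hYp.sub hYn
  unfold Hcov
  simp_rw [htr_eq_clamp_sub hL hLK]
  rw [cov_eq_covariance, covariance_sub_const_left (hXh.integrable one_le_two),
    covariance_sub_const_right (hYh.integrable one_le_two)]
  · exact covariance_fun_sub_fun_sub hXp hXn hYp hYn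
  · exact hXh.sub (memLp_const _)
  · exact hYh.sub (memLp_const _)

end Truncation

theorem pqd_truncated_cov_general
    (μ : Measure Ω) [IsProbabilityMeasure μ]
    (X Y : Ω → ℝ) (hX : Measurable X) (hY : Measurable Y)
    (hpqd : ∀ u v : ℝ,
        (μ {ω | X ω ≤ u}).toReal * (μ {ω | Y ω ≤ v}).toReal ≤
          (μ {ω | X ω ≤ u ∧ Y ω ≤ v}).toReal)
    (L K : ℝ) (hL : 0 < L) (hLK : L ≤ K) :
    0 ≤ Gcov μ X Y L ∧ Gcov μ X Y L ≤ Gcov μ X Y K ∧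
      max (Gcov μ X Y L) 0 + max (Hcov μ X Y L K) 0 ≤ Gcov μ X Y K := by
  set c : Fin 3 → Fin 3 → ℝ := fun i j =>
    cov[fun ω => truncPiece L K i (X ω), fun ω => truncPiece L K j (Y ω); μ]
  have hc : ∀ i j, 0 ≤ c i j := fun i j => PQD.covariance_clamp_nonneg hpqd hX hY _ _ _ _
  have hGL : Gcov μ X Y L = c 0 0 := Gcov_eq_covariance hX.aemeasurable hY.aemeasurable L
  have hGK : Gcov μ X Y K = ∑ i, ∑ j, c i j :=
    Gcov_eq_sum_covariance_truncPiece hL.le hLK hX.aemeasurable hY.aemeasurable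
  have hH : Hcov μ X Y L K = c 1 1 - c 1 2 - c 2 1 + c 2 2 :=
    Hcov_eq_covariance_clamp hL.le hLK hX.aemeasurable hY.aemeasurable
  simp only [Fin.sum_univ_three] at hGK
  rw [hGL, hGK, hH, max_eq_left (hc 0 0), ← max_add_add_left, add_zero]
  refine ⟨hc 0 0, ?_, max_le ?_ ?_⟩ <;>
    linarith [hc 0 1, hc 0 2, hc 1 0, hc 1 1, hc 1 2, hc 2 0, hc 2 1, hc 2 2]

/-- truncated covariances of a PQD pair. -/
theorem pqd_truncated_cov
    (μ : Measure Ω) [IsProbabilityMeasure μ]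
    (X Y : Ω → ℝ) (hX : Measurable X) (hY : Measurable Y)
    (hpqd : ∀ u v : ℝ,
        (μ {ω | X ω ≤ u}).toReal * (μ {ω | Y ω ≤ v}).toReal ≤
          (μ {ω | X ω ≤ u ∧ Y ω ≤ v}).toReal)
    (L K : ℝ) (hL : 0 < L) (hLK : L ≤ K)
    (hX2 : Integrable (fun ω => (X ω) ^ 2) μ)
    (hY2 : Integrable (fun ω => (Y ω) ^ 2) μ) :
    0 ≤ Gcov μ X Y L ∧ Gcov μ X Y L ≤ Gcov μ X Y K ∧
      max (Gcov μ X Y L) 0 + max (Hcov μ X Y L K) 0 ≤ Gcov μ X Y K :=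
  pqd_truncated_cov_general μ X Y hX hY hpqd L K hL hLK
end
end

section
/- Let r > 1 be an integer, n ≥ 0 an integer, {X_j, j ≥ 1} real random variables with E|X_j| < ∞, and {b_n} a nondecreasing sequence of positive constants. For b > 0 write X'_{j,b} = g_b(X_j) and, for 0 < L ≤ K, X''_{j,L,K} = h_{L,K}(X_j); set S_{m,b} = Σ_{j=1}^{m} (X'_{j,b} − E X'_{j,b}). Then, pointwise on the sample space: max_{1 ≤ m < r^{n+1}} |S_{m, b_{r^{n+1}}}| ≤ Σ_{k=1}^{n+1} max_{1 ≤ ℓ ≤ r−1} max_{0 ≤ h < r^{n−k+1}} | Σ_{j=1+h r^k}^{h r^k + ℓ r^{k−1}} (X'_{j, b_{r^{k−1}}} − E X'_{j, b_{r^{k−1}}}) | + Σ_{k=1}^{n+1} max_{0 ≤ h < r^{n−k+1}} | Σ_{j=1+h r^k}^{h r^k + r^k} (X''_{j, b_{r^{k−1}}, b_{r^k}} − E X''_{j, b_{r^{k−1}}, b_{r^k}}) | + 2 Σ_{k=1}^{n+1} max_{0 ≤ h < r^{n−k+1}} Σ_{j=1+h r^k}^{h r^k + r^k} E[|X_j|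 1{|X_j| > b_{r^{k−1}}}]. -/
open MeasureTheory Finset Filter

noncomputable section

variable {Ω : Type*} [MeasurableSpace Ω]

/-!
Write `x_p` for the sum of centred truncations at level `b (r ^ p)` and `D = g_K - g_L`, so that
`|D| = h_{L,K}(X) ≤ |X| 1{|X| > L}`. On a subset `s` of a block `t`,
`|∑_s (D - E D)| ≤ ∑_s (|D| + E|D|) ≤ ∑_t (|D| + E|D|)`, which is the centred `h`-sum over `t` plus
`2 ∑_t E|D|`. Hence raising the truncation level from `b (r ^ p)` to `b (r ^ (p + 1))` on an
initial piece of an `r ^ (p + 1)`-block costs at most the centred `h`-sum over the whole block plus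
twice its tail expectations. Cutting a partial sum of length `t < r ^ (p + 1)` as
`t = q r ^ p + s`, the first `q` sub-blocks form one of the level-`p` terms of the bound, and the
remainder is a partial sum inside a single `r ^ p`-block, so induction on `p` finishes.
-/

lemma gtr_of_abs_le {L t : ℝ} (h : |t| ≤ L) : gtr L t = t := by
  rw [abs_le] at h
  simp only [gtr, min_eq_left h.2, max_eq_right h.1]

lemma abs_gtr_le_abs {L : ℝ} (hL : 0 ≤ L) (t : ℝ) : |gtr L t| ≤ |t| := by
  simp only [gtr, abs_le, max_def, min_def]
  rcases abs_cases t with ⟨h, _⟩ | ⟨h, _⟩ <;> rw [h] <;> constructor <;> split_ifs <;>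
    linarith

lemma continuous_gtr (L : ℝ) : Continuous (gtr L) :=
  continuous_const.max (continuous_id.min continuous_const)

lemma htr_le_abs {L K : ℝ} (hL : 0 ≤ L) (hLK : L ≤ K) (t : ℝ) : htr L K t ≤ |t| := by
  simp only [htr, gtr, abs_le, max_def, min_def]
  rcases abs_cases t with ⟨h, _⟩ | ⟨h, _⟩ <;> rw [h] <;> constructor <;> split_ifs <;>
    linarith

lemma htr_eq_zero_of_abs_le {L K t : ℝ} (hLK : L ≤ K) (h : |t| ≤ L) : htr L K t = 0 := by
  rw [htr, gtr_of_abs_le h, gtr_of_abs_le (h.trans hLK), sub_self, abs_zero]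

lemma htr_le_indicator {L K : ℝ} (hL : 0 ≤ L) (hLK : L ≤ K) (t : ℝ) :
    htr L K t ≤ {s : ℝ | L < |s|}.indicator (fun s => |s|) t := by
  by_cases h : L < |t|
  · simpa [Set.indicator_of_mem, h] using htr_le_abs hL hLK t
  · simp [Set.indicator_of_notMem, h, htr_eq_zero_of_abs_le hLK (not_lt.1 h)]

lemma MeasureTheory.Integrable.gtr_comp {μ : Measure Ω} {X : Ω → ℝ} (hX : Integrable X μ)
    {L : ℝ} (hL : 0 ≤ L) : Integrable (fun ω => gtr L (X ω)) μ :=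
  hX.mono ((continuous_gtr L).comp_aestronglyMeasurable hX.1)
    (ae_of_all _ fun ω => by simpa only [Real.norm_eq_abs] using abs_gtr_le_abs hL (X ω))

lemma integral_htr_le_setIntegral {μ : Measure Ω} {X : Ω → ℝ} (hX : Integrable X μ)
    {L K : ℝ} (hL : 0 ≤ L) (hLK : L ≤ K) :
    ∫ ω, htr L K (X ω) ∂μ ≤ ∫ ω in {ω | L < |X ω|}, |X ω| ∂μ := by
  have hS : NullMeasurableSet {ω | L < |X ω|} μ :=
    nullMeasurableSet_lt aemeasurable_const hX.1.aemeasurable.abs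
  rw [← integral_indicator₀ hS]
  exact integral_mono_of_nonneg (ae_of_all _ fun ω => abs_nonneg _) (hX.abs.indicator₀ hS)
    (ae_of_all _ fun ω => htr_le_indicator hL hLK (X ω))

section CentredSums

variable {ι : Type*} {μ : Measure Ω}

lemma abs_sum_sub_integral_le_of_subset {D : ι → Ω → ℝ} {s t : Finset ι} (hst : s ⊆ t)
    (ω : Ω) :
    |∑ j ∈ s, (D j ω - ∫ x, D j x ∂μ)| ≤
      |∑ j ∈ t, (|D j ω| - ∫ x, |D j x| ∂μ)| + 2 * ∑ j ∈ t, ∫ x, |D j x| ∂μ :=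
  calc |∑ j ∈ s, (D j ω - ∫ x, D j x ∂μ)|
      ≤ ∑ j ∈ s, |D j ω - ∫ x, D j x ∂μ| := abs_sum_le_sum_abs _ _
    _ ≤ ∑ j ∈ s, (|D j ω| + ∫ x, |D j x| ∂μ) :=
        sum_le_sum fun j _ => (abs_sub _ _).trans (add_le_add le_rfl abs_integral_le_integral_abs)
    _ ≤ ∑ j ∈ t, (|D j ω| + ∫ x, |D j x| ∂μ) :=
        sum_le_sum_of_subset_of_nonneg hst fun j _ _ =>
          add_nonneg (abs_nonneg _) (integral_nonneg fun _ => abs_nonneg _)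
    _ = ∑ j ∈ t, (|D j ω| - ∫ x, |D j x| ∂μ) + 2 * ∑ j ∈ t, ∫ x, |D j x| ∂μ := by
        rw [sum_sub_distrib, sum_add_distrib]; ring
    _ ≤ _ := by gcongr; exact le_abs_self _

lemma abs_sum_centered_gtr_le {X : ι → Ω → ℝ} {L K : ℝ} (hL : 0 ≤ L) (hLK : L ≤ K)
    {s t : Finset ι} (hst : s ⊆ t) (hX : ∀ j ∈ t, Integrable (X j) μ) (ω : Ω) :
    |∑ j ∈ s, (gtr K (X j ω) - ∫ x, gtr K (X j x) ∂μ)| ≤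
      |∑ j ∈ s, (gtr L (X j ω) - ∫ x, gtr L (X j x) ∂μ)|
        + |∑ j ∈ t, (htr L K (X j ω) - ∫ x, htr L K (X j x) ∂μ)|
        + 2 * ∑ j ∈ t, ∫ x in {x | L < |X j x|}, |X j x| ∂μ := by
  set D : ι → Ω → ℝ := fun j x => gtr K (X j x) - gtr L (X j x)
  have hsplit : ∑ j ∈ s, (gtr K (X j ω) - ∫ x, gtr K (X j x) ∂μ) =
      ∑ j ∈ s, (gtr L (X j ω) - ∫ x, gtr L (X j x) ∂μ)
        + ∑ j ∈ s, (D j ω - ∫ x, D j x ∂μ) := by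
    rw [← sum_add_distrib]
    refine sum_congr rfl fun j hj => ?_
    have hXj := hX j (hst hj)
    rw [integral_sub (hXj.gtr_comp (hL.trans hLK)) (hXj.gtr_comp hL)]
    ring
  have hcentre : |∑ j ∈ s, (D j ω - ∫ x, D j x ∂μ)| ≤
      |∑ j ∈ t, (htr L K (X j ω) - ∫ x, htr L K (X j x) ∂μ)|
        + 2 * ∑ j ∈ t, ∫ x, htr L K (X j x) ∂μ :=
    abs_sum_sub_integral_le_of_subset hst ω
  have htail : ∑ j ∈ t, ∫ x, htr L K (X j x) ∂μ ≤
      ∑ j ∈ t, ∫ x in {x | L < |X j x|}, |X j x| ∂μ :=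
    sum_le_sum fun j hj => integral_htr_le_setIntegral (hX j hj) hL hLK
  calc _ ≤ |∑ j ∈ s, (gtr L (X j ω) - ∫ x, gtr L (X j x) ∂μ)|
          + |∑ j ∈ s, (D j ω - ∫ x, D j x ∂μ)| := hsplit ▸ abs_add_le _ _
    _ ≤ _ := by linarith

end CentredSums

lemma le_fmax {N i : ℕ} (h : i ≤ N) (f : ℕ → ℝ) : f i ≤ fmax N f :=
  le_sup' f (mem_range.2 (Nat.lt_succ_of_le h))

lemma le_fmax_of_le {N i : ℕ} {f : ℕ → ℝ} {c : ℝ} (hi : i ≤ N) (h : c ≤ f i) :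
    c ≤ fmax N f :=
  h.trans (le_fmax hi f)

lemma fmax_le {N : ℕ} {f : ℕ → ℝ} {c : ℝ} (h : ∀ i ≤ N, f i ≤ c) : fmax N f ≤ c :=
  sup'_le _ _ fun i hi => h i (Nat.le_of_lt_succ (mem_range.1 hi))

lemma fmax_nonneg {N : ℕ} {f : ℕ → ℝ} (h : ∀ i, 0 ≤ f i) : 0 ≤ fmax N f :=
  le_fmax_of_le (Nat.zero_le N) (h 0)

lemma Icc_one_add_eq_Ioc (a b : ℕ) : Icc (1 + a) b = Ioc a b := by
  rw [add_comm, Icc_add_one_left_eq_Ioc]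

/-- The right-hand side of the theorem, summed over the levels `k ≤ p` only, for abstract
sequences: `x p` plays the centred truncation at level `p`, `y k` the centred `h`-variable between
levels `k - 1` and `k`, and `e k` the tail expectation above level `k - 1`. -/
def adicBound (r N p : ℕ) (x y e : ℕ → ℕ → ℝ) : ℝ :=
  (∑ k ∈ Icc 1 p, fmax (r - 2) fun l => fmax (r ^ (N - k) - 1) fun h =>
      |∑ j ∈ Ioc (h * r ^ k) (h * r ^ k + (l + 1) * r ^ (k - 1)), x (k - 1) j|)
    + (∑ k ∈ Icc 1 p, fmax (r ^ (N - k) - 1) fun h =>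
      |∑ j ∈ Ioc (h * r ^ k) (h * r ^ k + r ^ k), y k j|)
    + 2 * ∑ k ∈ Icc 1 p, fmax (r ^ (N - k) - 1) fun h =>
      ∑ j ∈ Ioc (h * r ^ k) (h * r ^ k + r ^ k), e k j

lemma abs_sum_Ioc_le_adicBound {r N : ℕ} (x y e : ℕ → ℕ → ℝ)
    (hswap : ∀ p a u, u ≤ r ^ (p + 1) →
      |∑ j ∈ Ioc a (a + u), x (p + 1) j| ≤ |∑ j ∈ Ioc a (a + u), x p j|
        + |∑ j ∈ Ioc a (a + r ^ (p + 1)), y (p + 1) j|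
        + 2 * ∑ j ∈ Ioc a (a + r ^ (p + 1)), e (p + 1) j)
    {p : ℕ} (hpN : p ≤ N) {H : ℕ} (hH : H < r ^ (N - p)) {t : ℕ} (ht : t < r ^ p) :
    |∑ j ∈ Ioc (H * r ^ p) (H * r ^ p + t), x p j| ≤ adicBound r N p x y e := by
  induction p generalizing H t with
  | zero =>
    obtain rfl : t = 0 := by simpa using ht
    simp [adicBound]
  | succ p ih =>
    have hr : 0 < r := Nat.pos_of_ne_zero fun hr => by simp [hr] at ht
    obtain ⟨q, s, hq, hs, rfl⟩ : ∃ q s, q < r ∧ s < r ^ p ∧ t = q * r ^ p + s :=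
      ⟨t / r ^ p, t % r ^ p, (Nat.div_lt_iff_lt_mul (by positivity)).2 (by rwa [pow_succ'] at ht),
        Nat.mod_lt _ (by positivity), (Nat.div_add_mod' t _).symm⟩
    set a := H * r ^ (p + 1)
    have hHle : H ≤ r ^ (N - (p + 1)) - 1 := by omega
    have hsplit : |∑ j ∈ Ioc a (a + (q * r ^ p + s)), x p j| ≤
        |∑ j ∈ Ioc a (a + q * r ^ p), x p j|
          + |∑ j ∈ Ioc (a + q * r ^ p) (a + q * r ^ p + s), x p j| := by
      rw [← sum_Ioc_consecutive (x p) (Nat.le_add_right a (q * r ^ p))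
        (by omega : a + q * r ^ p ≤ a + (q * r ^ p + s)), ← add_assoc]
      exact abs_add_le _ _
    have hhead : |∑ j ∈ Ioc a (a + q * r ^ p), x p j| ≤ fmax (r - 2) fun l =>
        fmax (r ^ (N - (p + 1)) - 1) fun h =>
          |∑ j ∈ Ioc (h * r ^ (p + 1)) (h * r ^ (p + 1) + (l + 1) * r ^ p), x p j| := by
      rcases Nat.eq_zero_or_pos q with rfl | hq0
      · simp only [zero_mul, add_zero, Ioc_self, sum_empty, abs_zero]
        exact fmax_nonneg fun _ => fmax_nonneg fun _ => abs_nonneg _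
      · obtain ⟨l, rfl⟩ : ∃ l, q = l + 1 := ⟨q - 1, by omega⟩
        exact le_fmax_of_le (by omega) (le_fmax_of_le hHle le_rfl)
    have hrest : |∑ j ∈ Ioc (a + q * r ^ p) (a + q * r ^ p + s), x p j| ≤
        adicBound r N p x y e := by
      have hH' : H * r + q < r ^ (N - p) := calc
        H * r + q < (H + 1) * r := by rw [add_mul, one_mul]; omega
        _ ≤ r ^ (N - (p + 1)) * r := Nat.mul_le_mul_right _ hH
        _ = r ^ (N - p) := by rw [← pow_succ]; congr 1; omega
      rw [show a + q * r ^ p = (H * r + q) * r ^ p by ring]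
      exact ih (by omega) hH' hs
    have hy := le_fmax hHle fun h =>
      |∑ j ∈ Ioc (h * r ^ (p + 1)) (h * r ^ (p + 1) + r ^ (p + 1)), y (p + 1) j|
    have he := le_fmax hHle fun h =>
      ∑ j ∈ Ioc (h * r ^ (p + 1)) (h * r ^ (p + 1) + r ^ (p + 1)), e (p + 1) j
    have hsw := hswap p a _ ht.le
    simp only [adicBound, sum_Icc_succ_top (Nat.le_add_left 1 p), Nat.add_sub_cancel]
      at hrest ⊢
    linarith

theorem pointwise_truncated_max_bound_general
    (μ : Measure Ω)
    (r : ℕ) (hr : 1 < r) (n : ℕ)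
    (X : ℕ → Ω → ℝ)
    (hXint : ∀ j : ℕ, 1 ≤ j → Integrable (X j) μ)
    (b : ℕ → ℝ) (hbpos : ∀ m : ℕ, 1 ≤ m → 0 < b m)
    (hbmono : ∀ m k : ℕ, 1 ≤ m → m ≤ k → b m ≤ b k) :
    ∀ ω : Ω,
      fmax (r ^ (n + 1) - 2) (fun m =>
          |∑ j ∈ Finset.Icc 1 (m + 1),
            (gtr (b (r ^ (n + 1))) (X j ω) - ∫ x, gtr (b (r ^ (n + 1))) (X j x) ∂μ)|) ≤
        (∑ k ∈ Finset.Icc 1 (n + 1),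
          fmax (r - 2) (fun l =>
            fmax (r ^ (n + 1 - k) - 1) (fun h =>
              |∑ j ∈ Finset.Icc (1 + h * r ^ k) (h * r ^ k + (l + 1) * r ^ (k - 1)),
                (gtr (b (r ^ (k - 1))) (X j ω) -
                  ∫ x, gtr (b (r ^ (k - 1))) (X j x) ∂μ)|)))
        + (∑ k ∈ Finset.Icc 1 (n + 1),
            fmax (r ^ (n + 1 - k) - 1) (fun h =>
              |∑ j ∈ Finset.Icc (1 + h * r ^ k) (h * r ^ k + r ^ k),
                (htr (b (r ^ (k - 1))) (b (r ^ k)) (X j ω) -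
                  ∫ x, htr (b (r ^ (k - 1))) (b (r ^ k)) (X j x) ∂μ)|))
        + 2 * ∑ k ∈ Finset.Icc 1 (n + 1),
            fmax (r ^ (n + 1 - k) - 1) (fun h =>
              ∑ j ∈ Finset.Icc (1 + h * r ^ k) (h * r ^ k + r ^ k),
                ∫ x in {x | b (r ^ (k - 1)) < |X j x|}, |X j x| ∂μ) := by
  intro ω
  have hb : ∀ p, 0 < b (r ^ p) := fun p => hbpos _ (Nat.one_le_pow _ _ (by omega))
  have hrN : 2 ≤ r ^ (n + 1) := Nat.one_lt_pow (Nat.succ_ne_zero n) hr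
  refine fmax_le fun m hm => ?_
  have := abs_sum_Ioc_le_adicBound (r := r) (N := n + 1)
    (fun p j => gtr (b (r ^ p)) (X j ω) - ∫ x, gtr (b (r ^ p)) (X j x) ∂μ)
    (fun k j => htr (b (r ^ (k - 1))) (b (r ^ k)) (X j ω)
      - ∫ x, htr (b (r ^ (k - 1))) (b (r ^ k)) (X j x) ∂μ)
    (fun k j => ∫ x in {x | b (r ^ (k - 1)) < |X j x|}, |X j x| ∂μ)
    (fun p a u hu => abs_sum_centered_gtr_le (hb p).le
      (hbmono _ _ (Nat.one_le_pow _ _ (by omega)) (Nat.pow_le_pow_right (by omega) p.le_succ))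
      (Ioc_subset_Ioc_right (by omega)) (fun j hj => hXint j (by linarith [(mem_Ioc.1 hj).1])) ω)
    le_rfl (H := 0) (by simp) (t := m + 1) (by omega)
  simpa only [adicBound, Icc_one_add_eq_Ioc, ← Icc_add_one_left_eq_Ioc 0, zero_mul, zero_add]
    using this

/-- pointwise decomposition bound for the truncated partial-sum maximum. -/
theorem pointwise_truncated_max_bound
    (μ : Measure Ω) [IsProbabilityMeasure μ]
    (r : ℕ) (hr : 1 < r) (n : ℕ)
    (X : ℕ → Ω → ℝ)
    (hXmeas : ∀ j : ℕ, 1 ≤ j → Measurable (X j))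
    (hXint : ∀ j : ℕ, 1 ≤ j → Integrable (X j) μ)
    (b : ℕ → ℝ) (hbpos : ∀ m : ℕ, 1 ≤ m → 0 < b m)
    (hbmono : ∀ m k : ℕ, 1 ≤ m → m ≤ k → b m ≤ b k) :
    ∀ ω : Ω,
      fmax (r ^ (n + 1) - 2) (fun m =>
          |∑ j ∈ Finset.Icc 1 (m + 1),
            (gtr (b (r ^ (n + 1))) (X j ω) - ∫ x, gtr (b (r ^ (n + 1))) (X j x) ∂μ)|) ≤
        (∑ k ∈ Finset.Icc 1 (n + 1),
          fmax (r - 2) (fun l =>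
            fmax (r ^ (n + 1 - k) - 1) (fun h =>
              |∑ j ∈ Finset.Icc (1 + h * r ^ k) (h * r ^ k + (l + 1) * r ^ (k - 1)),
                (gtr (b (r ^ (k - 1))) (X j ω) -
                  ∫ x, gtr (b (r ^ (k - 1))) (X j x) ∂μ)|)))
        + (∑ k ∈ Finset.Icc 1 (n + 1),
            fmax (r ^ (n + 1 - k) - 1) (fun h =>
              |∑ j ∈ Finset.Icc (1 + h * r ^ k) (h * r ^ k + r ^ k),
                (htr (b (r ^ (k - 1))) (b (r ^ k)) (X j ω) -
                  ∫ x, htr (b (r ^ (k - 1))) (b (r ^ k)) (X j x) ∂μ)|))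
        + 2 * ∑ k ∈ Finset.Icc 1 (n + 1),
            fmax (r ^ (n + 1 - k) - 1) (fun h =>
              ∑ j ∈ Finset.Icc (1 + h * r ^ k) (h * r ^ k + r ^ k),
                ∫ x in {x | b (r ^ (k - 1)) < |X j x|}, |X j x| ∂μ) :=
  pointwise_truncated_max_bound_general μ r hr n X hXint b hbpos hbmono
end
end
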